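/- Let (X, Z) be a random vector in ℝ² with joint density f(x, z) with respect to Lebesgue measure, and let X̃ = s(X) be a Gaussian transformation of X as in the preceding theorem (s one-to-one, continuously differentiable with everywhere nonzero derivative on an open support of X). Assume ν_f(X̃|Z) is well defined and that Corr_f(X̃, Z) is well defined with Corr_f²(X̃, Z) < 1. Then −(1/2) log ν_f(X̃|Z) ≥ −(1/2) log(1 − Corr_f²(X̃, Z)); that is, the lower bound on I_f(X;Z) based on ν_f(X̃|Z) is at least as large as the Pearson-correlation-based lower bound. -/

import Mathlib

/-! The conditional mean `E[U|Z]` is the L²-orthogonal projection of `U` onto the square-integrable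
functions of `Z`, so its mean-square residual is at most that of the best affine predictor
`E U + (Cov(U,Z) / V Z) (Z - E Z)`, which is `V U (1 - Corr²(U,Z))`; hence
`ν(U|Z) ≤ 1 - Corr²(U,Z)`, and the claim follows by monotonicity of `log` once `ν(U|Z) > 0`.
That positivity is where the density enters: if `s(X)` were a.s. equal to `h(Z)`, the law of
`(X, Z)` would charge the set `{(x, z) | x ∈ A, s x = h z}`, where `A` is a support of `X` on
which `s` is injective; its slices `z = const` are at most singletons, so it is Lebesgue-null. -/

open MeasureTheory ProbabilityTheory Real

/-- Conditional mean `E[U | σ(Z)]`. -/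
noncomputable def condMean {Ω β : Type*} [MeasurableSpace Ω] [MeasurableSpace β]
    (μ : Measure Ω) (U : Ω → ℝ) (Z : Ω → β) : Ω → ℝ :=
  μ[U | MeasurableSpace.comap Z inferInstance]

/-- `ν(U|Z) = E{V[U|Z]}/V[U] = E[(U − E[U|Z])²] / V[U]`. -/
noncomputable def nuScalar {Ω β : Type*} [MeasurableSpace Ω] [MeasurableSpace β]
    (μ : Measure Ω) (U : Ω → ℝ) (Z : Ω → β) : ℝ :=
  (∫ ω, (U ω - condMean μ U Z ω) ^ 2 ∂μ) / variance U μ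

/-- Pearson correlation `Corr(A,B) = Cov(A,B)/(V[A] V[B])^{1/2}`. -/
noncomputable def corr {Ω : Type*} [MeasurableSpace Ω] (μ : Measure Ω)
    (A B : Ω → ℝ) : ℝ :=
  (∫ ω, (A ω - ∫ ω', A ω' ∂μ) * (B ω - ∫ ω', B ω' ∂μ) ∂μ) /
    (Real.sqrt (variance A μ) * Real.sqrt (variance B μ))

lemma corr_sq {Ω : Type*} [MeasurableSpace Ω] (μ : Measure Ω) (A B : Ω → ℝ) :
    corr μ A B ^ 2 = cov[A, B; μ] ^ 2 / (Var[A; μ] * Var[B; μ]) := by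
  rw [corr, div_pow, mul_pow, sq_sqrt (variance_nonneg A μ), sq_sqrt (variance_nonneg B μ)]
  rfl

section Projection

variable {Ω : Type*} {m m₀ : MeasurableSpace Ω} {μ : Measure Ω} [IsFiniteMeasure μ]
  {U V : Ω → ℝ}

lemma integral_mul_sub_condExp_eq_zero (hm : m ≤ m₀) (hU : MemLp U 2 μ) (hV : MemLp V 2 μ)
    (hVm : StronglyMeasurable[m] V) :
    ∫ ω, V ω * (U ω - μ[U|m] ω) ∂μ = 0 := by
  have hVU : Integrable (V * U) μ := hV.integrable_mul hU
  have hVE : Integrable (V * μ[U|m]) μ := hV.integrable_mul (hU.condExp one_le_two)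
  have hpull : ∫ ω, (V * U) ω ∂μ = ∫ ω, (V * μ[U|m]) ω ∂μ := calc
    _ = ∫ ω, μ[V * U|m] ω ∂μ := (integral_condExp hm).symm
    _ = _ := integral_congr_ae
      (condExp_mul_of_stronglyMeasurable_left hVm hVU (hU.integrable one_le_two))
  simp_rw [mul_sub]
  exact (integral_sub hVU hVE).trans (sub_eq_zero.2 hpull)

lemma integral_sq_sub_condExp_le (hm : m ≤ m₀) (hU : MemLp U 2 μ) (hV : MemLp V 2 μ)
    (hVm : StronglyMeasurable[m] V) :
    ∫ ω, (U ω - μ[U|m] ω) ^ 2 ∂μ ≤ ∫ ω, (U ω - V ω) ^ 2 ∂μ := by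
  set E := μ[U|m]
  have hE : MemLp E 2 μ := hU.condExp one_le_two
  have hcross : ∫ ω, (E - V) ω * (U ω - E ω) ∂μ = 0 :=
    integral_mul_sub_condExp_eq_zero hm hU (hE.sub hV) (stronglyMeasurable_condExp.sub hVm)
  have hsplit : (fun ω => (U ω - V ω) ^ 2) = fun ω =>
      (U ω - E ω) ^ 2 + 2 * ((E - V) ω * (U ω - E ω)) + (E - V) ω ^ 2 := by
    ext ω; simp only [Pi.sub_apply]; ring
  have hUE : Integrable (fun ω => (U ω - E ω) ^ 2) μ := (hU.sub hE).integrable_sq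
  have hED : Integrable (fun ω => 2 * ((E - V) ω * (U ω - E ω))) μ :=
    ((hE.sub hV).integrable_mul (hU.sub hE)).const_mul 2
  have hD : Integrable (fun ω => (E - V) ω ^ 2) μ := (hE.sub hV).integrable_sq
  rw [hsplit, integral_add (hUE.fun_add hED) hD, integral_add hUE hED, integral_const_mul, hcross]
  have : 0 ≤ ∫ ω, (E - V) ω ^ 2 ∂μ := integral_nonneg fun ω => sq_nonneg _
  linarith

end Projection

section LinearPrediction

variable {Ω : Type*} {m₀ : MeasurableSpace Ω} {μ : Measure Ω} [IsFiniteMeasure μ]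
  {U Z : Ω → ℝ}

lemma integral_sq_sub_condExp_le_variance_sub_mul {m : MeasurableSpace Ω} (hm : m ≤ m₀)
    (hU : MemLp U 2 μ) (hZ : MemLp Z 2 μ) (hZm : StronglyMeasurable[m] Z) (b : ℝ) :
    ∫ ω, (U ω - μ[U|m] ω) ^ 2 ∂μ ≤ Var[fun ω => U ω - b * Z ω; μ] := by
  have hW : MemLp (fun ω => U ω - b * Z ω) 2 μ := hU.sub (hZ.const_mul b)
  have hresidual : ∀ ω, U ω - (b * Z ω + μ[fun ω => U ω - b * Z ω]) =
      (U ω - b * Z ω) - μ[fun ω => U ω - b * Z ω] := fun ω => by ring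
  rw [variance_eq_integral hW.aemeasurable]
  simp_rw [← hresidual]
  exact integral_sq_sub_condExp_le hm hU ((hZ.const_mul b).add (memLp_const _))
    ((hZm.const_mul b).add stronglyMeasurable_const)

lemma variance_sub_covariance_div_mul (hU : MemLp U 2 μ) (hZ : MemLp Z 2 μ) :
    Var[fun ω => U ω - cov[U, Z; μ] / Var[Z; μ] * Z ω; μ] =
      Var[U; μ] - cov[U, Z; μ] ^ 2 / Var[Z; μ] := by
  rw [variance_fun_sub hU (hZ.const_mul _), covariance_const_mul_right, variance_const_mul]
  rcases eq_or_ne Var[Z; μ] 0 with h | h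
  · -- `x / 0 = 0` reduces both sides to `Var U`
    simp [h]
  · field_simp
    ring

lemma nuScalar_le_one_sub_corr_sq (hU : MemLp U 2 μ) (hZ : MemLp Z 2 μ) (hZm : Measurable Z) :
    nuScalar μ U Z ≤ 1 - corr μ U Z ^ 2 := by
  have hbound := integral_sq_sub_condExp_le_variance_sub_mul hZm.comap_le hU hZ
    (comap_measurable Z).stronglyMeasurable (cov[U, Z; μ] / Var[Z; μ])
  rw [variance_sub_covariance_div_mul hU hZ] at hbound
  rw [nuScalar, condMean, corr_sq]
  rcases (variance_nonneg U μ).eq_or_lt with h | h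
  · -- `ν` and `Corr` are then divisions by zero, so the claim reads `0 ≤ 1`
    simp [← h]
  rw [div_le_iff₀ h]
  refine hbound.trans_eq ?_
  rw [sub_mul, one_mul, mul_comm Var[U; μ], div_mul_eq_mul_div, mul_div_mul_right _ _ h.ne']

end LinearPrediction

section AbsolutelyContinuousLaw

variable {α β : Type*} [MeasurableSpace α] [MeasurableSpace β] {μα : Measure α} {μβ : Measure β}
  [NullSingletonClass μα] [SFinite μα] [SFinite μβ] {A : Set α}

lemma Set.InjOn.measure_prod_setOf_eq_eq_zero {γ : Type*} [MeasurableSpace γ] [MeasurableEq γ]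
    {s : α → γ} {h : β → γ} (hinj : Set.InjOn s A) (hA : MeasurableSet A) (hs : Measurable s)
    (hh : Measurable h) :
    μα.prod μβ {p | p.1 ∈ A ∧ s p.1 = h p.2} = 0 := by
  have hmeas : MeasurableSet {p : α × β | p.1 ∈ A ∧ s p.1 = h p.2} :=
    (measurable_fst hA).inter
      (measurableSet_eq_fun (hs.comp measurable_fst) (hh.comp measurable_snd))
  have hslice (z : β) : μα ((fun x => (x, z)) ⁻¹' {p | p.1 ∈ A ∧ s p.1 = h p.2}) = 0 :=
    Set.Subsingleton.measure_zero (fun x hx y hy => hinj hx.1 hy.1 (hx.2.trans hy.2.symm)) μα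
  rw [Measure.prod_apply_symm hmeas]
  simp only [hslice, lintegral_zero]

variable {Ω : Type*} [MeasurableSpace Ω] {μ : Measure Ω} {X : Ω → α} {Z : Ω → β} {s : α → ℝ}

lemma ae_ne_comp_of_injOn (hX : Measurable X) (hZ : Measurable Z)
    (hac : μ.map (fun ω => (X ω, Z ω)) ≪ μα.prod μβ) (hinj : Set.InjOn s A)
    (hA : MeasurableSet A) (hs : Measurable s) (hXA : ∀ᵐ ω ∂μ, X ω ∈ A) {h : β → ℝ}
    (hh : Measurable h) :
    ∀ᵐ ω ∂μ, s (X ω) ≠ h (Z ω) := by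
  have hnull : μ ((fun ω => (X ω, Z ω)) ⁻¹' {p | p.1 ∈ A ∧ s p.1 = h p.2}) = 0 :=
    nonpos_iff_eq_zero.1 ((Measure.le_map_apply (hX.prodMk hZ).aemeasurable _).trans
      (hac (hinj.measure_prod_setOf_eq_eq_zero hA hs hh)).le)
  filter_upwards [hXA, measure_eq_zero_iff_ae_notMem.1 hnull] with ω hωA hω heq
  exact hω ⟨hωA, heq⟩

lemma integral_sq_sub_condExp_comap_pos [NeZero μ] (hX : Measurable X)
    (hZ : Measurable Z) (hac : μ.map (fun ω => (X ω, Z ω)) ≪ μα.prod μβ)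
    (hinj : Set.InjOn s A) (hA : MeasurableSet A) (hs : Measurable s)
    (hXA : ∀ᵐ ω ∂μ, X ω ∈ A) (hsX : MemLp (fun ω => s (X ω)) 2 μ) :
    0 < ∫ ω, (s (X ω) - μ[fun ω => s (X ω)|MeasurableSpace.comap Z inferInstance] ω) ^ 2 ∂μ := by
  refine (integral_nonneg fun _ => sq_nonneg _).lt_of_ne' fun hzero => ?_
  obtain ⟨h, hh, hfactor⟩ := (stronglyMeasurable_condExp (μ := μ)
    (f := fun ω => s (X ω)) (m := MeasurableSpace.comap Z inferInstance)).exists_eq_measurable_comp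
  have hsq := (integral_eq_zero_iff_of_nonneg (fun _ => sq_nonneg _)
    (hsX.sub (hsX.condExp one_le_two)).integrable_sq).1 hzero
  obtain ⟨ω, hω0, hωne⟩ :=
    (hsq.and (ae_ne_comp_of_injOn hX hZ hac hinj hA hs hXA hh.measurable)).exists
  rw [hfactor] at hω0
  exact hωne (sub_eq_zero.1 (pow_eq_zero_iff two_ne_zero |>.1 hω0))

end AbsolutelyContinuousLaw

theorem stmt_10_general
    {Ω : Type*} [MeasurableSpace Ω] (μ : Measure Ω) [IsProbabilityMeasure μ]
    (X Z : Ω → ℝ) (f : ℝ × ℝ → ℝ) (s : ℝ → ℝ)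
    (hXmeas : Measurable X) (hZmeas : Measurable Z) (hsmeas : Measurable s)
    -- `f` is the joint density of `(X,Z)` with respect to Lebesgue measure
    (hdens : Measure.map (fun ω => (X ω, Z ω)) μ =
      (volume : Measure (ℝ × ℝ)).withDensity (fun p => ENNReal.ofReal (f p)))
    -- `s` is one-to-one and continuously differentiable with everywhere nonzero
    -- derivative on an open set that is a support of `X`
    (hdom : ∃ U : Set ℝ, IsOpen U ∧ Set.InjOn s U ∧ ContDiffOn ℝ 1 s U ∧
      (∀ x ∈ U, deriv s x ≠ 0) ∧ μ (X ⁻¹' U) = 1)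
    -- `ν_f(X̃|Z)` and `Corr_f(X̃,Z)` are well defined, with `Corr_f²(X̃,Z) < 1`
    (hL2 : MemLp (fun ω => s (X ω)) 2 μ) (hZL2 : MemLp Z 2 μ)
    (hvar : 0 < variance (fun ω => s (X ω)) μ) :
    -(1 / 2) * Real.log (nuScalar μ (fun ω => s (X ω)) Z) ≥
      -(1 / 2) * Real.log (1 - corr μ (fun ω => s (X ω)) Z ^ 2) := by
  obtain ⟨U, hUopen, hinj, -, -, hXU⟩ := hdom
  have hac : μ.map (fun ω => (X ω, Z ω)) ≪ volume.prod volume := by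
    rw [hdens, ← Measure.volume_eq_prod]
    exact withDensity_absolutelyContinuous _ _
  have hXU_ae : ∀ᵐ ω ∂μ, X ω ∈ U :=
    (ae_mem_iff_measure_eq (hXmeas hUopen.measurableSet).nullMeasurableSet).2
      (by rw [hXU, measure_univ])
  have hnu_pos : 0 < nuScalar μ (fun ω => s (X ω)) Z :=
    div_pos (integral_sq_sub_condExp_comap_pos hXmeas hZmeas hac hinj hUopen.measurableSet hsmeas
      hXU_ae hL2) hvar
  have hlog := Real.log_le_log hnu_pos (nuScalar_le_one_sub_corr_sq hL2 hZL2 hZmeas)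
  linarith

/-- second inequality of Theorem 4 of the paper. With `X̃ = s(X)` a
Gaussian transformation of `X` as in the preceding theorem, if `ν_f(X̃|Z)` is well
defined and `Corr_f²(X̃,Z) < 1`, then
`−(1/2) log ν_f(X̃|Z) ≥ −(1/2) log(1 − Corr_f²(X̃,Z))`. -/
theorem stmt_10
    {Ω : Type*} [MeasurableSpace Ω] (μ : Measure Ω) [IsProbabilityMeasure μ]
    (X Z : Ω → ℝ) (f : ℝ × ℝ → ℝ) (s : ℝ → ℝ)
    (hXmeas : Measurable X) (hZmeas : Measurable Z) (hsmeas : Measurable s)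
    -- `f` is the joint density of `(X,Z)` with respect to Lebesgue measure
    (hdens : Measure.map (fun ω => (X ω, Z ω)) μ =
      (volume : Measure (ℝ × ℝ)).withDensity (fun p => ENNReal.ofReal (f p)))
    -- `s` is one-to-one and continuously differentiable with everywhere nonzero
    -- derivative on an open set that is a support of `X`
    (hdom : ∃ U : Set ℝ, IsOpen U ∧ Set.InjOn s U ∧ ContDiffOn ℝ 1 s U ∧
      (∀ x ∈ U, deriv s x ≠ 0) ∧ μ (X ⁻¹' U) = 1)
    -- `X̃ = s(X)` has a (nondegenerate) Gaussian density
    (hGauss : ∃ (a : ℝ) (v : NNReal), v ≠ 0 ∧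
      Measure.map (fun ω => s (X ω)) μ = gaussianReal a v)
    -- `ν_f(X̃|Z)` and `Corr_f(X̃,Z)` are well defined, with `Corr_f²(X̃,Z) < 1`
    (hL2 : MemLp (fun ω => s (X ω)) 2 μ) (hZL2 : MemLp Z 2 μ)
    (hvar : 0 < variance (fun ω => s (X ω)) μ) (hZvar : 0 < variance Z μ)
    (hcorr : corr μ (fun ω => s (X ω)) Z ^ 2 < 1) :
    -(1 / 2) * Real.log (nuScalar μ (fun ω => s (X ω)) Z) ≥
      -(1 / 2) * Real.log (1 - corr μ (fun ω => s (X ω)) Z ^ 2) :=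
  stmt_10_general μ X Z f s hXmeas hZmeas hsmeas hdens hdom hL2 hZL2 hvar
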